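/- Assume σ_1(A) = 1 and let A_1 be the rank-1 cross approximation of A built from a maximal-volume 1×1 submatrix (a maximal-modulus entry). Then ‖A − A_1‖_C ≤ 2σ_2(A)/√(1 + σ_2(A)²). In particular, if σ_2(A) = 1/2, then ‖A − A_1‖_C ≤ 2√5/5. -/

import Mathlib

open Matrix BigOperators Filter

noncomputable def sval {m n : ℕ} (A : Matrix (Fin m) (Fin n) ℝ) (k : Fin n) : ℝ :=
  Real.sqrt ((Matrix.isHermitian_conjTranspose_mul_self A).eigenvalues
    (Tuple.sort (Matrix.isHermitian_conjTranspose_mul_self A).eigenvalues (Fin.rev k)))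

noncomputable def chebNorm {m n : ℕ} (A : Matrix (Fin m) (Fin n) ℝ) : ℝ :=
  ⨆ i, ⨆ j, |A i j|

noncomputable def frobNorm {m n : ℕ} (A : Matrix (Fin m) (Fin n) ℝ) : ℝ :=
  Real.sqrt (∑ i, ∑ j, (A i j) ^ 2)

/-!
Fix an entry `(p, q)` with `p ≠ i`, `q ≠ j` and let `B` be the `2 × 2` submatrix of `A` on rows
`i, p` and columns `j, q`; the error of the cross approximation at `(p, q)` is the Schur complement
`det B / A i j`. Since `σ₁(A) = 1`, `B` is a contraction, and by Courant–Fischer `‖A x‖ ≤ σ₂(A) ‖x‖`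
on a hyperplane, so `B` obeys the same bound on a line. Testing both bounds on an orthogonal pair of
vectors of equal length gives `det B² (1 + σ₂²) ≤ σ₂² ‖B‖_F²`, and maximality of `|A i j|` gives
`‖B‖_F² ≤ 4 A i j²`.
-/

lemma Tuple.apply_le_apply_sort {n : ℕ} {α : Type*} [LinearOrder α] (μ : Fin n → α)
    {k l : Fin n} (h : (Tuple.sort μ).symm k ≤ l) : μ k ≤ μ (Tuple.sort μ l) := by
  simpa using Tuple.monotone_sort μ h

lemma det_sq_mul_one_add_le {a b c d s α β : ℝ}
    (hup : ∀ x₁ x₂, (a * x₁ + b * x₂) ^ 2 + (c * x₁ + d * x₂) ^ 2 ≤ x₁ ^ 2 + x₂ ^ 2)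
    (hlow : ∀ x₁ x₂, α * x₁ + β * x₂ = 0 →
      (a * x₁ + b * x₂) ^ 2 + (c * x₁ + d * x₂) ^ 2 ≤ s * (x₁ ^ 2 + x₂ ^ 2)) :
    (a * d - b * c) ^ 2 * (1 + s) ≤ s * (a ^ 2 + b ^ 2 + c ^ 2 + d ^ 2) := by
  obtain ⟨α, β, hN, hlow⟩ : ∃ α β : ℝ, 0 < α ^ 2 + β ^ 2 ∧ ∀ x₁ x₂, α * x₁ + β * x₂ = 0 →
      (a * x₁ + b * x₂) ^ 2 + (c * x₁ + d * x₂) ^ 2 ≤ s * (x₁ ^ 2 + x₂ ^ 2) := by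
    by_cases h : α = 0 ∧ β = 0
    · exact ⟨1, 0, by norm_num, fun x₁ x₂ _ => hlow x₁ x₂ (by simp [h.1, h.2])⟩
    · refine ⟨α, β, ?_, hlow⟩
      rcases not_and_or.mp h with h | h <;> positivity
  set N := α ^ 2 + β ^ 2
  set X := (a * α + b * β) ^ 2 + (c * α + d * β) ^ 2
  set Y := (a * -β + b * α) ^ 2 + (c * -β + d * α) ^ 2
  have hX : X ≤ N := hup α β
  have hY : Y ≤ s * N := (hlow (-β) α (by ring)).trans_eq (by ring)
  have hsum : X + Y = N * (a ^ 2 + b ^ 2 + c ^ 2 + d ^ 2) := by ring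
  have hlagrange : X * Y =
      ((a * α + b * β) * (a * -β + b * α) + (c * α + d * β) * (c * -β + d * α)) ^ 2
        + N ^ 2 * (a * d - b * c) ^ 2 := by ring
  have hX0 : 0 ≤ X := by positivity
  have hY0 : 0 ≤ Y := by positivity
  have hs : 0 ≤ s := nonneg_of_mul_nonneg_left (hY0.trans hY) hN
  refine le_of_mul_le_mul_left ?_ (pow_pos hN 2)
  nlinarith [mul_le_mul_of_nonneg_left hY hX0, mul_le_mul_of_nonneg_right hX (mul_nonneg hs hY0),
    sq_nonneg ((a * α + b * β) * (a * -β + b * α) + (c * α + d * β) * (c * -β + d * α))]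

lemma sq_sub_mul_inv_mul_le {a b c d s : ℝ} (hb : |b| ≤ |a|) (hc : |c| ≤ |a|) (hd : |d| ≤ |a|)
    (hs : 0 ≤ s) (hdet : (a * d - b * c) ^ 2 * (1 + s) ≤ s * (a ^ 2 + b ^ 2 + c ^ 2 + d ^ 2)) :
    (d - c * a⁻¹ * b) ^ 2 ≤ 4 * s / (1 + s) := by
  rcases eq_or_ne a 0 with rfl | ha
  · simp only [abs_zero, abs_nonpos_iff] at hb hc hd
    rw [hb, hc, hd, zero_mul, zero_mul, sub_zero, zero_pow two_ne_zero]
    positivity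
  rw [← sq_le_sq] at hb hc hd
  have hschur : d - c * a⁻¹ * b = (a * d - b * c) / a := by field_simp
  rw [hschur, div_pow, div_le_div_iff₀ (by positivity) (by positivity)]
  nlinarith [mul_le_mul_of_nonneg_left (add_le_add (add_le_add hb hc) hd) hs]

namespace Matrix

variable {m n : Type*} [Fintype m] [Fintype n]

lemma dotProduct_diagonal_mulVec_le [DecidableEq n] {μ y : n → ℝ} {c : ℝ}
    (h : ∀ k, y k ≠ 0 → μ k ≤ c) : y ⬝ᵥ diagonal μ *ᵥ y ≤ c * (y ⬝ᵥ y) := by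
  simp only [dotProduct, mulVec_diagonal, Finset.mul_sum]
  refine Finset.sum_le_sum fun k _ => ?_
  by_cases hk : y k = 0
  · simp [hk]
  · nlinarith [h k hk, mul_self_nonneg (y k)]

lemma unitaryGroup.star_mulVec_dotProduct_self [DecidableEq n] (U : unitaryGroup n ℝ)
    (x : n → ℝ) : (star (U : Matrix n n ℝ) *ᵥ x) ⬝ᵥ (star (U : Matrix n n ℝ) *ᵥ x) = x ⬝ᵥ x := by
  conv_lhs => rw [dotProduct_comm, dotProduct_mulVec, star_eq_conjTranspose,
    conjTranspose_eq_transpose_of_trivial, vecMul_transpose]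
  rw [mulVec_mulVec, ← conjTranspose_eq_transpose_of_trivial, ← star_eq_conjTranspose,
    Unitary.mul_star_self_of_mem U.2, one_mulVec]

lemma IsHermitian.dotProduct_mulVec_eq [DecidableEq n] {M : Matrix n n ℝ} (hM : M.IsHermitian)
    (x : n → ℝ) :
    x ⬝ᵥ M *ᵥ x = (star (hM.eigenvectorUnitary : Matrix n n ℝ) *ᵥ x) ⬝ᵥ
      diagonal hM.eigenvalues *ᵥ (star (hM.eigenvectorUnitary : Matrix n n ℝ) *ᵥ x) := by
  conv_lhs => rw [hM.spectral_theorem]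
  rw [Unitary.conjStarAlgAut_apply, ← mulVec_mulVec, ← mulVec_mulVec, dotProduct_mulVec,
    star_eq_conjTranspose, conjTranspose_eq_transpose_of_trivial, mulVec_transpose]
  simp only [RCLike.ofReal_real_eq_id, Function.id_comp]

lemma mulVec_dotProduct_mulVec_self (A : Matrix m n ℝ) (x : n → ℝ) :
    (A *ᵥ x) ⬝ᵥ (A *ᵥ x) = x ⬝ᵥ (Aᴴ * A) *ᵥ x := by
  rw [← mulVec_mulVec, dotProduct_mulVec x, conjTranspose_eq_transpose_of_trivial,
    vecMul_transpose]

lemma sq_add_sq_le_of_mulVec_single_add_single [DecidableEq n] {A : Matrix m n ℝ}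
    {i p : m} {j q : n} (hp : p ≠ i) (hq : q ≠ j) {t x₁ x₂ : ℝ}
    (h : (A *ᵥ (Pi.single j x₁ + Pi.single q x₂)) ⬝ᵥ (A *ᵥ (Pi.single j x₁ + Pi.single q x₂))
      ≤ t * ((Pi.single j x₁ + Pi.single q x₂) ⬝ᵥ (Pi.single j x₁ + Pi.single q x₂))) :
    (A i j * x₁ + A i q * x₂) ^ 2 + (A p j * x₁ + A p q * x₂) ^ 2 ≤ t * (x₁ ^ 2 + x₂ ^ 2) := by
  set w := A *ᵥ (Pi.single j x₁ + Pi.single q x₂)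
  have hw : ∀ r, w r = A r j * x₁ + A r q * x₂ := by
    intro r; simp [w, mulVec_add, mul_comm]
  have hnorm : (Pi.single j x₁ + Pi.single q x₂ : n → ℝ) ⬝ᵥ (Pi.single j x₁ + Pi.single q x₂)
      = x₁ ^ 2 + x₂ ^ 2 := by
    simp [dotProduct_add, hq, hq.symm, sq]
  have hrows : w i ^ 2 + w p ^ 2 ≤ w ⬝ᵥ w := by
    classical
    simp only [dotProduct, ← sq]
    rw [← Finset.sum_pair (f := fun r => w r ^ 2) hp.symm]
    exact Finset.sum_le_univ_sum_of_nonneg fun r => sq_nonneg (w r)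
  rw [← hw, ← hw, ← hnorm]
  exact hrows.trans h

lemma abs_sub_mul_inv_mul_le [DecidableEq n] {A : Matrix m n ℝ} {σ : ℝ} (hσ : 0 ≤ σ)
    (hA : ∀ x, (A *ᵥ x) ⬝ᵥ (A *ᵥ x) ≤ x ⬝ᵥ x) {v : n → ℝ}
    (hv : ∀ x, v ⬝ᵥ x = 0 → (A *ᵥ x) ⬝ᵥ (A *ᵥ x) ≤ σ ^ 2 * (x ⬝ᵥ x))
    {i : m} {j : n} (hmax : ∀ p q, |A p q| ≤ |A i j|) (p : m) (q : n) :
    |A p q - A p j * (A i j)⁻¹ * A i q| ≤ 2 * σ / √(1 + σ ^ 2) := by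
  have hdet : (A i j * A p q - A i q * A p j) ^ 2 * (1 + σ ^ 2)
      ≤ σ ^ 2 * (A i j ^ 2 + A i q ^ 2 + A p j ^ 2 + A p q ^ 2) := by
    by_cases hp : p = i
    · subst hp
      rw [mul_comm (A p q), sub_self, zero_pow two_ne_zero, zero_mul]
      positivity
    by_cases hq : q = j
    · subst hq
      rw [sub_self, zero_pow two_ne_zero, zero_mul]
      positivity
    refine det_sq_mul_one_add_le (α := v j) (β := v q) (fun x₁ x₂ => ?_) (fun x₁ x₂ hx => ?_)
    · simpa using sq_add_sq_le_of_mulVec_single_add_single hp hq (t := 1)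
        ((hA _).trans_eq (one_mul _).symm)
    · exact sq_add_sq_le_of_mulVec_single_add_single hp hq
        (hv _ (by simpa [dotProduct_add] using hx))
  have hsq := sq_sub_mul_inv_mul_le (hmax i q) (hmax p j) (hmax p q) (sq_nonneg σ) hdet
  calc |A p q - A p j * (A i j)⁻¹ * A i q| ≤ √(4 * σ ^ 2 / (1 + σ ^ 2)) := Real.abs_le_sqrt hsq
    _ = 2 * σ / √(1 + σ ^ 2) := by
      rw [Real.sqrt_div' _ (by positivity), show 4 * σ ^ 2 = (2 * σ) ^ 2 by ring,
        Real.sqrt_sq (by positivity)]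

end Matrix

section SingularValues

variable {m n : ℕ} (A : Matrix (Fin m) (Fin n) ℝ)

lemma sval_nonneg (k : Fin n) : 0 ≤ sval A k :=
  Real.sqrt_nonneg _

lemma sval_sq (k : Fin n) :
    sval A k ^ 2 = (isHermitian_conjTranspose_mul_self A).eigenvalues
      (Tuple.sort (isHermitian_conjTranspose_mul_self A).eigenvalues k.rev) :=
  Real.sq_sqrt (eigenvalues_conjTranspose_mul_self_nonneg A _)

lemma mulVec_dotProduct_mulVec_self_le_sval_zero (hn : 0 < n) (x : Fin n → ℝ) :
    (A *ᵥ x) ⬝ᵥ (A *ᵥ x) ≤ sval A ⟨0, hn⟩ ^ 2 * (x ⬝ᵥ x) := by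
  have hM := isHermitian_conjTranspose_mul_self A
  rw [mulVec_dotProduct_mulVec_self, hM.dotProduct_mulVec_eq,
    ← unitaryGroup.star_mulVec_dotProduct_self hM.eigenvectorUnitary x, sval_sq]
  refine dotProduct_diagonal_mulVec_le fun k _ => Tuple.apply_le_apply_sort _ ?_
  have := ((Tuple.sort hM.eigenvalues).symm k).isLt
  simp only [Fin.le_def, Fin.val_rev]
  omega

lemma exists_mulVec_dotProduct_mulVec_self_le_sval_one (hn : 1 < n) :
    ∃ v : Fin n → ℝ, ∀ x, v ⬝ᵥ x = 0 →
      (A *ᵥ x) ⬝ᵥ (A *ᵥ x) ≤ sval A ⟨1, hn⟩ ^ 2 * (x ⬝ᵥ x) := by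
  have hM := isHermitian_conjTranspose_mul_self A
  set U : Matrix (Fin n) (Fin n) ℝ := ↑hM.eigenvectorUnitary
  set top := Tuple.sort hM.eigenvalues (Fin.rev ⟨0, by omega⟩)
  refine ⟨fun r => U r top, fun x hx => ?_⟩
  rw [mulVec_dotProduct_mulVec_self, hM.dotProduct_mulVec_eq,
    ← unitaryGroup.star_mulVec_dotProduct_self hM.eigenvectorUnitary x, sval_sq]
  refine dotProduct_diagonal_mulVec_le fun k hk => Tuple.apply_le_apply_sort _ ?_
  have hktop : k ≠ top := by
    rintro rfl
    exact hk hx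
  have hlt := ((Tuple.sort hM.eigenvalues).symm k).isLt
  have hne : (Tuple.sort hM.eigenvalues).symm k ≠ Fin.rev ⟨0, by omega⟩ := by
    rw [Ne, Equiv.symm_apply_eq]
    exact hktop
  simp only [Fin.le_def, Fin.val_rev, ne_eq, Fin.ext_iff] at hne ⊢
  omega

end SingularValues

theorem stmt15 {m n : ℕ} (hn : 1 < n)
    (A : Matrix (Fin m) (Fin n) ℝ)
    (hσ1 : sval A ⟨0, by omega⟩ = 1)
    (i : Fin m) (j : Fin n) (hmax : ∀ (p : Fin m) (q : Fin n), |A p q| ≤ |A i j|) :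
    chebNorm (A - Matrix.of fun p q => A p j * (A i j)⁻¹ * A i q)
        ≤ 2 * sval A ⟨1, hn⟩ / Real.sqrt (1 + sval A ⟨1, hn⟩ ^ 2) ∧
      (sval A ⟨1, hn⟩ = 1 / 2 →
        chebNorm (A - Matrix.of fun p q => A p j * (A i j)⁻¹ * A i q)
          ≤ 2 * Real.sqrt 5 / 5) := by
  have hA : ∀ x, (A *ᵥ x) ⬝ᵥ (A *ᵥ x) ≤ x ⬝ᵥ x := fun x => by
    simpa [hσ1] using mulVec_dotProduct_mulVec_self_le_sval_zero A (by omega) x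
  obtain ⟨v, hv⟩ := exists_mulVec_dotProduct_mulVec_self_le_sval_one A hn
  have : Nonempty (Fin m) := ⟨i⟩
  have : Nonempty (Fin n) := ⟨j⟩
  have hcheb : chebNorm (A - Matrix.of fun p q => A p j * (A i j)⁻¹ * A i q)
      ≤ 2 * sval A ⟨1, hn⟩ / Real.sqrt (1 + sval A ⟨1, hn⟩ ^ 2) :=
    ciSup_le fun p => ciSup_le fun q => abs_sub_mul_inv_mul_le (sval_nonneg A _) hA hv hmax p q
  refine ⟨hcheb, fun hhalf => hcheb.trans_eq ?_⟩
  rw [hhalf, show (1 : ℝ) + (1 / 2) ^ 2 = 5 / 2 ^ 2 by norm_num, Real.sqrt_div' _ (by positivity),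
    Real.sqrt_sq (by norm_num)]
  field_simp
  exact (Real.sq_sqrt (by norm_num)).symm
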